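/- Let D be combinatorial data of an oriented virtual knot diagram with crossing set C, and suppose that for each crossing c ∈ C there is given combinatorial data of the oriented virtual knot diagram D_c obtained from D by smoothing against orientation at c (with its own finite crossing set, sign function and index function), so that for every positive integer n the integer ∇J_n(D_c) is the n-th dwrithe computed from the data of D_c. Then there exists a natural number n₀ such that for every integer n > n₀ the n-th F-polynomial coincides with the affine index polynomial: F^n_D(t, ℓ) = P_D(t). -/

import Mathlib

open LaurentPolynomial Finset

/-- Combinatorial data of an oriented virtual knot diagram: a finite set of
classical crossings with a sign function taking values in `{1, -1}` and an
index function. -/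
structure VKData where
  Crossing : Type
  [fin : Fintype Crossing]
  sgn : Crossing → ℤ
  sgn_pm : ∀ c, sgn c = 1 ∨ sgn c = -1
  Ind : Crossing → ℤ

attribute [instance] VKData.fin

/-- The `n`-th writhe `J_n(D)`. -/
def VKData.J (D : VKData) (n : ℤ) : ℤ :=
  ∑ c : D.Crossing, if D.Ind c = n then D.sgn c else 0

/-- The `n`-th dwrithe `∇J_n(D) = J_n(D) - J_{-n}(D)`. -/
def VKData.nablaJ (D : VKData) (n : ℤ) : ℤ := D.J n - D.J (-n)

/-- The affine index polynomial `P_D(t)`, in `ℤ[t, t⁻¹]`. -/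
noncomputable def VKData.P (D : VKData) : LaurentPolynomial ℤ :=
  ∑ c : D.Crossing, D.sgn c • (T (D.Ind c) - 1)

/-- `T_n(D)`, given the smoothing data `sm c = ∇J_n(D_c)`. -/
def VKData.Tset (D : VKData) (n : ℤ) (sm : D.Crossing → ℤ) : Finset D.Crossing :=
  Finset.univ.filter (fun c => |sm c| = |D.nablaJ n|)

/-- The `n`-th `F`-polynomial, in `ℤ[t, t⁻¹, ℓ, ℓ⁻¹]`, realized as Laurent
polynomials in the outer variable `ℓ` over Laurent polynomials in `t`. -/
noncomputable def VKData.F (D : VKData) (n : ℤ) (sm : D.Crossing → ℤ) :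
    LaurentPolynomial (LaurentPolynomial ℤ) :=
  (∑ c : D.Crossing, D.sgn c • (LaurentPolynomial.C (T (D.Ind c)) * T (sm c)))
  - (∑ c ∈ D.Tset n sm, D.sgn c • T (sm c))
  - (∑ c ∈ Finset.univ.filter (fun c => ¬ |sm c| = |D.nablaJ n|), D.sgn c • T (D.nablaJ n))

/-! Once `n` exceeds the absolute value of every index occurring in `D` and in the smoothed
diagrams `D_c`, no crossing has index `±n`, so all the dwrithes `∇J_n(D)` and `∇J_n(D_c)`
vanish. Then `T_n(D)` is the whole crossing set and each term `sgn(c) t^{Ind(c)} ℓ^0 - sgn(c) ℓ^0`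
of `F^n_D` is the corresponding term of `P_D`. -/

namespace VKData

def indexBound (D : VKData) : ℕ :=
  univ.sup fun c => (D.Ind c).natAbs

lemma natAbs_Ind_le_indexBound (D : VKData) (c : D.Crossing) :
    (D.Ind c).natAbs ≤ D.indexBound :=
  le_sup (f := fun c => (D.Ind c).natAbs) (mem_univ c)

lemma J_eq_zero_of_indexBound_lt (D : VKData) {n : ℤ} (hn : D.indexBound < n.natAbs) :
    D.J n = 0 :=
  sum_eq_zero fun c _ => by
    have := D.natAbs_Ind_le_indexBound c
    rw [if_neg (by omega)]

lemma nablaJ_eq_zero_of_indexBound_lt (D : VKData) {n : ℤ} (hn : (D.indexBound : ℤ) < n) :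
    D.nablaJ n = 0 := by
  have hn' : D.indexBound < n.natAbs := by omega
  rw [nablaJ, D.J_eq_zero_of_indexBound_lt hn',
    D.J_eq_zero_of_indexBound_lt (by rwa [Int.natAbs_neg]), sub_zero]

lemma F_eq_C_P_of_nablaJ_eq_zero (D : VKData) {n : ℤ} {sm : D.Crossing → ℤ}
    (hD : D.nablaJ n = 0) (hsm : ∀ c, sm c = 0) : D.F n sm = C D.P := by
  simp only [F, Tset, hsm, hD, not_true_eq_false, filter_true, filter_false, sum_empty,
    sub_zero, T_zero, mul_one, P, map_sum, ← sum_sub_distrib]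
  refine sum_congr rfl fun c _ => ?_
  rw [map_zsmul, map_sub, map_one, smul_sub]

end VKData

/-- If each crossing `c` of `D` is given the full combinatorial data of the
smoothed diagram `D_c`, then there exists `n₀` such that for every integer
`n > n₀` the `n`-th `F`-polynomial coincides with the affine index
polynomial. -/
theorem F_eventually_eq_P (D : VKData) (Dc : D.Crossing → VKData) :
    ∃ n₀ : ℕ, ∀ n : ℤ, (n₀ : ℤ) < n →
      D.F n (fun c => (Dc c).nablaJ n) = LaurentPolynomial.C D.P := by
  refine ⟨D.indexBound ⊔ univ.sup fun c => (Dc c).indexBound, fun n hn => ?_⟩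
  rw [Nat.cast_max, max_lt_iff] at hn
  refine D.F_eq_C_P_of_nablaJ_eq_zero (D.nablaJ_eq_zero_of_indexBound_lt hn.1) fun c => ?_
  have hc : (Dc c).indexBound ≤ univ.sup fun c => (Dc c).indexBound :=
    le_sup (f := fun c => (Dc c).indexBound) (mem_univ c)
  exact (Dc c).nablaJ_eq_zero_of_indexBound_lt (lt_of_le_of_lt (by exact_mod_cast hc) hn.2)
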